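/- If f ∈ C(X,ℝ) has a unique maximizing measure, then the correspondence g ↦ M_max(g) is upper semi-continuous at f in the strong sense: writing M_max(f) = {μ₀}, for every weak*-open set U ⊆ M containing μ₀ there exists δ > 0 such that for every g ∈ C(X,ℝ) with ‖g − f‖_∞ < δ one has M_max(g) ⊆ U. -/

import Mathlib

/-!
The set `M` of invariant measures is weak*-closed in the compact space of probability measures,
so `M \ U` is compact. On it `μ ↦ ∫ f dμ` is continuous and stays below `β(f)`, because `μ₀` is
the only measure attaining `β(f)`; hence it stays below `β(f) - ε` for some `ε > 0`. Replacing
`f` by `g` changes every integral, and therefore `β`, by at most `‖g - f‖`, so for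
`‖g - f‖ < ε / 2` no measure of `M \ U` can be `g`-maximizing.
-/

open MeasureTheory Topology Filter
open scoped NNReal

variable {X : Type*} [MetricSpace X] [CompactSpace X] [Nonempty X]
  [MeasurableSpace X] [BorelSpace X]

/-- The set of `T`-invariant Borel probability measures on `X`,
equipped (as a subtype) with the weak* topology. -/
def Minv (T : X → X) : Set (ProbabilityMeasure X) :=
  {μ | (μ : Measure X).map T = (μ : Measure X)}

/-- The integral of a continuous function against a probability measure. -/
noncomputable def intf (f : C(X, ℝ)) (μ : ProbabilityMeasure X) : ℝ :=
  ∫ x, f x ∂(μ : Measure X)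

/-- The maximum ergodic average `β(f) = sup {∫ f dμ : μ ∈ M}`. -/
noncomputable def beta (T : X → X) (f : C(X, ℝ)) : ℝ :=
  sSup (intf f '' Minv T)

/-- The set of `f`-maximizing measures. -/
def MMax (T : X → X) (f : C(X, ℝ)) : Set (ProbabilityMeasure X) :=
  {μ ∈ Minv T | intf f μ = beta T f}

section

omit [Nonempty X]

omit [CompactSpace X] in
theorem isClosed_Minv {T : X → X} (hT : Continuous T) : IsClosed (Minv T) := by
  have : Minv T = {μ | μ.map hT.aemeasurable = μ} := Set.ext fun μ => by
    rw [Set.mem_ofPred_eq, ← ProbabilityMeasure.toMeasure_injective.eq_iff,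
      ProbabilityMeasure.toMeasure_map]
    rfl
  rw [this]
  exact isClosed_eq (ProbabilityMeasure.continuous_map hT) continuous_id

theorem continuous_intf (f : C(X, ℝ)) : Continuous (intf f) :=
  ProbabilityMeasure.continuous_integral_boundedContinuousFunction
    (BoundedContinuousFunction.mkOfCompact f)

theorem intf_sub (f g : C(X, ℝ)) (μ : ProbabilityMeasure X) :
    intf (f - g) μ = intf f μ - intf g μ :=
  integral_sub (f.continuous.integrable_of_hasCompactSupport (.of_compactSpace f))
    (g.continuous.integrable_of_hasCompactSupport (.of_compactSpace g))

theorem abs_intf_le (f : C(X, ℝ)) (μ : ProbabilityMeasure X) : |intf f μ| ≤ ‖f‖ := by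
  simpa [intf] using BoundedContinuousFunction.norm_integral_le_norm (μ : Measure X)
    (BoundedContinuousFunction.mkOfCompact f)

theorem abs_intf_sub_intf_le (f g : C(X, ℝ)) (μ : ProbabilityMeasure X) :
    |intf g μ - intf f μ| ≤ ‖g - f‖ :=
  intf_sub g f μ ▸ abs_intf_le (g - f) μ

theorem intf_le_beta (T : X → X) (f : C(X, ℝ)) {μ : ProbabilityMeasure X} (hμ : μ ∈ Minv T) :
    intf f μ ≤ beta T f := by
  refine le_csSup ⟨‖f‖, ?_⟩ ⟨μ, hμ, rfl⟩
  rintro _ ⟨ν, -, rfl⟩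
  exact le_of_abs_le (abs_intf_le f ν)

theorem intf_lt_beta_of_MMax_eq_singleton {T : X → X} {f : C(X, ℝ)}
    {μ₀ μ : ProbabilityMeasure X} (huniq : MMax T f = {μ₀}) (hμ : μ ∈ Minv T) (hne : μ ≠ μ₀) :
    intf f μ < beta T f :=
  (intf_le_beta T f hμ).lt_of_ne fun h => hne <|
    Set.mem_singleton_iff.1 (huniq ▸ ⟨hμ, h⟩)

theorem notMem_MMax_of_intf_add_two_mul_lt {T : X → X} {f g : C(X, ℝ)}
    {μ₀ μ : ProbabilityMeasure X} (hμ₀ : μ₀ ∈ MMax T f)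
    (h : intf f μ + 2 * ‖g - f‖ < beta T f) : μ ∉ MMax T g := by
  rintro ⟨-, hμg⟩
  have hμ := abs_le.1 (abs_intf_sub_intf_le f g μ)
  have hμ₀' := abs_le.1 (abs_intf_sub_intf_le f g μ₀)
  linarith [intf_le_beta T g hμ₀.1, hμ₀.2]

end

theorem MMax_usc_at_unique_general (T : X → X) (hT : Continuous T)
    (f : C(X, ℝ)) (μ₀ : Minv T) (huniq : MMax T f = {(μ₀ : ProbabilityMeasure X)}) :
    ∀ U : Set (Minv T), IsOpen U → μ₀ ∈ U →
      ∃ δ > (0 : ℝ), ∀ g : C(X, ℝ), ‖g - f‖ < δ →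
        ∀ μ : ProbabilityMeasure X, ∀ hμ : μ ∈ MMax T g, (⟨μ, hμ.1⟩ : Minv T) ∈ U := by
  intro U hU hμ₀U
  have : CompactSpace (Minv T) := isCompact_iff_compactSpace.mp (isClosed_Minv hT).isCompact
  obtain ⟨ε, hε, hgap⟩ : ∃ ε > 0, ∀ ν ∈ Uᶜ, ε ≤ beta T f - intf f ν :=
    hU.isClosed_compl.isCompact.exists_forall_le'
      (continuous_const.sub ((continuous_intf f).comp continuous_subtype_val)).continuousOn
      fun ν hν => sub_pos.2 <| intf_lt_beta_of_MMax_eq_singleton huniq ν.2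
        fun h => hν (Subtype.ext h ▸ hμ₀U)
  refine ⟨ε / 2, half_pos hε, fun g hg μ hμ => ?_⟩
  by_contra hμU
  have hμ₀ : (μ₀ : ProbabilityMeasure X) ∈ MMax T f := huniq.symm ▸ rfl
  refine notMem_MMax_of_intf_add_two_mul_lt hμ₀ ?_ hμ
  linarith [hgap _ hμU]

/-- If `f` has a unique maximizing measure, the correspondence `g ↦ M_max(g)` is upper
semi-continuous at `f`: any weak*-open `U ⊆ M` containing `μ₀` absorbs `M_max(g)` for all
`g` uniformly close to `f`. -/
theorem MMax_usc_at_unique (T : X → X) (hT : Continuous T) (hM : (Minv T).Nonempty)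
    (f : C(X, ℝ)) (μ₀ : Minv T) (huniq : MMax T f = {(μ₀ : ProbabilityMeasure X)}) :
    ∀ U : Set (Minv T), IsOpen U → μ₀ ∈ U →
      ∃ δ > (0 : ℝ), ∀ g : C(X, ℝ), ‖g - f‖ < δ →
        ∀ μ : ProbabilityMeasure X, ∀ hμ : μ ∈ MMax T g, (⟨μ, hμ.1⟩ : Minv T) ∈ U :=
  MMax_usc_at_unique_general T hT f μ₀ huniq
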